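/- arXiv:math/0501387 — 2 statements merged into one kernel-verified Lean document; each statement's English description precedes it below -/
import Mathlib

section
/- Given any sequence of monic polynomials $f_1,\dots,f_n\in\mathbb{C}[t]$ with $\deg f_m=m$, there exists a unique $n\times n$ Hessenberg matrix $x$ (with subdiagonal entries equal to $1$ and zeros below the subdiagonal) such that for every $m\in\{1,\dots,n\}$ the characteristic polynomial of the upper-left $m\times m$ submatrix $x_m$ equals $f_m$. -/
open Polynomial Finset

lemma sum_zero_of_monic (p : ℕ → Polynomial ℂ) (hm : ∀ i, (p i).Monic)
    (hd : ∀ i, (p i).natDegree = i) :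
    ∀ m (c : Fin m → ℂ), (∑ i : Fin m, C (c i) * p (i : ℕ)) = 0 → c = 0 := by
  intro m
  induction m with
  | zero => intro c _; funext i; exact i.elim0
  | succ m ih =>
    intro c hc
    have hlast : c (Fin.last m) = 0 := by
      have := congrArg (fun q => Polynomial.coeff q m) hc
      simp only [Polynomial.finset_sum_coeff, Polynomial.coeff_C_mul,
        Polynomial.coeff_zero] at this
      rw [Fin.sum_univ_castSucc] at this
      have h1 : ∀ i : Fin m, (p (i : ℕ)).coeff m = 0 := fun i =>
        Polynomial.coeff_eq_zero_of_natDegree_lt (by rw [hd]; exact i.isLt)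
      simp only [Fin.coe_castSucc, Fin.val_last] at this
      rw [Finset.sum_eq_zero (fun i _ => by rw [h1 i, mul_zero])] at this
      have h2 : (p m).coeff m = 1 := by
        have := (hm m).coeff_natDegree; rwa [hd] at this
      rw [h2, mul_one, zero_add] at this
      exact this
    have hrest : (fun i : Fin m => c i.castSucc) = 0 := by
      apply ih
      rw [Fin.sum_univ_castSucc] at hc
      simp only [Fin.val_last, hlast, map_zero, zero_mul, add_zero] at hc
      simpa using hc
    funext i
    rcases Fin.eq_castSucc_or_eq_last i with ⟨j, rfl⟩ | rfl
    · exact congrFun hrest j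
    · exact hlast

lemma exists_unique_repr (p : ℕ → Polynomial ℂ) (hm : ∀ i, (p i).Monic)
    (hd : ∀ i, (p i).natDegree = i) (m : ℕ) (g : Polynomial ℂ) (hg : g.degree < m) :
    ∃! c : Fin m → ℂ, g = ∑ i : Fin m, C (c i) * p (i : ℕ) := by
  have hex : ∀ (m : ℕ) (g : Polynomial ℂ), g.degree < (m : WithBot ℕ) →
      ∃ c : Fin m → ℂ, g = ∑ i : Fin m, C (c i) * p (i : ℕ) := by
    intro m
    induction m with
    | zero =>
      intro g hg
      refine ⟨0, ?_⟩
      have : g = 0 := by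
        ext k
        exact (Polynomial.degree_lt_iff_coeff_zero g 0).1 (by exact_mod_cast hg) k (Nat.zero_le k)
      simp [this]
    | succ m ih =>
      intro g hg
      set a := g.coeff m with ha
      have hdeg' : (g - C a * p m).degree < m := by
        rw [Polynomial.degree_lt_iff_coeff_zero]
        intro k hk
        rcases eq_or_lt_of_le hk with h | hk'
        · subst h
          have h2 : (p m).coeff m = 1 := by
            have := (hm m).coeff_natDegree; rwa [hd] at this
          simp [Polynomial.coeff_C_mul, h2, ha]
        · have hgk : g.coeff k = 0 :=
            (Polynomial.degree_lt_iff_coeff_zero g (m+1)).1 (by exact_mod_cast hg) k hk'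
          have hpk : (p m).coeff k = 0 :=
            Polynomial.coeff_eq_zero_of_natDegree_lt (by rw [hd]; exact hk')
          simp [Polynomial.coeff_C_mul, hgk, hpk]
      obtain ⟨c', hc'⟩ := ih _ hdeg'
      refine ⟨Fin.snoc c' a, ?_⟩
      rw [Fin.sum_univ_castSucc]
      simp only [Fin.snoc_castSucc, Fin.snoc_last, Fin.coe_castSucc, Fin.val_last]
      rw [← hc']
      ring
  obtain ⟨c, hc⟩ := hex m g hg
  refine ⟨c, hc, fun d hdq => ?_⟩
  have : (fun i : Fin m => d i - c i) = 0 := by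
    apply sum_zero_of_monic p hm hd
    have : (∑ i : Fin m, C (d i) * p (i : ℕ)) - (∑ i : Fin m, C (c i) * p (i : ℕ)) = 0 := by
      rw [← hdq, ← hc, sub_self]
    rw [← Finset.sum_sub_distrib] at this
    convert this using 2 with i
    rw [map_sub]; ring
  funext i
  have h := congrFun this i
  simpa [sub_eq_zero] using h

open Polynomial Finset Matrix

def lead {n : ℕ} (x : Matrix (Fin n) (Fin n) ℂ) (m : ℕ) (h : m ≤ n) :
    Matrix (Fin m) (Fin m) ℂ :=
  x.submatrix (Fin.castLE h) (Fin.castLE h)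

lemma minor_det (n : ℕ) (x : Matrix (Fin (n+1)) (Fin (n+1)) ℂ)
    (hsub : ∀ i : Fin (n+1), ∀ hi : (i : ℕ) + 1 < n+1, x ⟨(i : ℕ) + 1, hi⟩ i = 1)
    (hzero : ∀ i j : Fin (n+1), (j : ℕ) + 1 < (i : ℕ) → x i j = 0)
    (i : Fin (n+1)) :
    ((Matrix.charmatrix x).submatrix i.succAbove Fin.castSucc).det
      = (-1)^(n - (i:ℕ)) * (lead x (i:ℕ) (by omega)).charpoly := by
  set k := (i : ℕ) with hki
  have hk : k ≤ n := by omega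
  have hkn : k + (n - k) = n := by omega
  let e : Fin k ⊕ Fin (n-k) ≃ Fin n := finSumFinEquiv.trans (finCongr hkn)
  set M := (Matrix.charmatrix x).submatrix i.succAbove Fin.castSucc with hMdef
  rw [← Matrix.det_submatrix_equiv_self e M]
  have hval_inl : ∀ a : Fin k, ((e (Sum.inl a)) : ℕ) = (a : ℕ) := by
    intro a; simp [e]
  have hval_inr : ∀ b : Fin (n-k), ((e (Sum.inr b)) : ℕ) = k + (b : ℕ) := by
    intro b; simp [e]
  have hsa : ∀ j : Fin n, ((i.succAbove j : Fin (n+1)) : ℕ)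
      = if (j:ℕ) < k then (j:ℕ) else (j:ℕ)+1 := by
    intro j
    rcases lt_or_ge ((j:ℕ)) k with h | h
    · rw [Fin.succAbove_of_castSucc_lt _ _ (by rw [Fin.lt_def]; simpa using h)]
      simp [h]
    · rw [Fin.succAbove_of_le_castSucc _ _ (by rw [Fin.le_def]; simpa using h)]
      simp [Fin.val_succ, Nat.not_lt.2 h]
  have hrow_inl : ∀ a : Fin k, i.succAbove (e (Sum.inl a)) = Fin.castLE (by omega) a := by
    intro a; apply Fin.ext; rw [hsa]; rw [hval_inl]
    simp [a.isLt]
  have hcol_inl : ∀ b : Fin k, Fin.castSucc (e (Sum.inl b)) = Fin.castLE (by omega) b := by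
    intro b; apply Fin.ext; simp [hval_inl]
  have hrow_inr : ∀ b : Fin (n-k), i.succAbove (e (Sum.inr b))
      = (⟨k + (b:ℕ) + 1, by omega⟩ : Fin (n+1)) := by
    intro b; apply Fin.ext; rw [hsa]; rw [hval_inr]
    simp
  have hcol_inr : ∀ c : Fin (n-k), Fin.castSucc (e (Sum.inr c))
      = (⟨k + (c:ℕ), by omega⟩ : Fin (n+1)) := by
    intro c; apply Fin.ext; simp [hval_inr]
  have hMe : ∀ a b, (M.submatrix e e) a b
      = Matrix.charmatrix x (i.succAbove (e a)) (Fin.castSucc (e b)) := fun a b => rfl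
  rw [← Matrix.fromBlocks_toBlocks (M.submatrix ⇑e ⇑e)]
  have hZ : (M.submatrix ⇑e ⇑e).toBlocks₂₁ = 0 := by
    ext b a
    simp only [Matrix.toBlocks₂₁, Matrix.of_apply, Matrix.zero_apply]
    rw [hMe, hrow_inr, hcol_inl, Matrix.charmatrix_apply, Matrix.diagonal_apply]
    rw [if_neg (by simp [Fin.ext_iff]; omega)]
    rw [hzero _ _ (by simp; omega)]
    simp
  rw [hZ, Matrix.det_fromBlocks_zero₂₁]
  have hA : (M.submatrix ⇑e ⇑e).toBlocks₁₁ = Matrix.charmatrix (lead x k (by omega)) := by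
    ext a b
    simp only [Matrix.toBlocks₁₁, Matrix.of_apply]
    rw [hMe, hrow_inl, hcol_inl, Matrix.charmatrix_apply, Matrix.charmatrix_apply,
      Matrix.diagonal_apply, Matrix.diagonal_apply]
    have : (Fin.castLE (by omega : k ≤ n+1) a = Fin.castLE (by omega) b) ↔ (a = b) := by
      simp [Fin.ext_iff]
    rw [if_congr this rfl rfl]
    rfl
  have hD : (M.submatrix ⇑e ⇑e).toBlocks₂₂.det = (-1)^(n-k) := by
    have htri : ((M.submatrix ⇑e ⇑e).toBlocks₂₂).BlockTriangular id := by
      intro b c hbc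
      simp only [id_eq] at hbc
      simp only [Matrix.toBlocks₂₂, Matrix.of_apply]
      rw [hMe, hrow_inr, hcol_inr, Matrix.charmatrix_apply, Matrix.diagonal_apply]
      rw [if_neg (by simp [Fin.ext_iff]; omega)]
      rw [hzero _ _ (by simp; omega)]
      simp
    rw [Matrix.det_of_upperTriangular htri]
    have hdiag : ∀ b : Fin (n-k), (M.submatrix ⇑e ⇑e).toBlocks₂₂ b b = -1 := by
      intro b
      simp only [Matrix.toBlocks₂₂, Matrix.of_apply]
      rw [hMe, hrow_inr, hcol_inr, Matrix.charmatrix_apply, Matrix.diagonal_apply]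
      rw [if_neg (by simp [Fin.ext_iff])]
      have := hsub ⟨k + (b:ℕ), by omega⟩ (by simp; omega)
      simp only at this
      rw [this]
      simp
    rw [Finset.prod_congr rfl (fun b _ => hdiag b)]
    simp [Finset.card_univ]
  rw [hA, hD]
  rw [Matrix.charpoly]
  ring

lemma hess_charpoly_rec (n : ℕ) (x : Matrix (Fin (n+1)) (Fin (n+1)) ℂ)
    (hsub : ∀ i : Fin (n+1), ∀ hi : (i : ℕ) + 1 < n+1, x ⟨(i : ℕ) + 1, hi⟩ i = 1)
    (hzero : ∀ i j : Fin (n+1), (j : ℕ) + 1 < (i : ℕ) → x i j = 0) :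
    x.charpoly = (X - C (x (Fin.last n) (Fin.last n))) * (lead x n (by omega)).charpoly
      - ∑ i : Fin n, C (x (Fin.castSucc i) (Fin.last n)) * (lead x (i:ℕ) (by omega)).charpoly := by
  rw [Matrix.charpoly, Matrix.det_succ_column _ (Fin.last n)]
  simp only [Fin.succAbove_last]
  have hterm : ∀ i : Fin (n+1),
      (-1 : Polynomial ℂ)^((i:ℕ) + (Fin.last n : ℕ)) * Matrix.charmatrix x i (Fin.last n)
        * ((Matrix.charmatrix x).submatrix i.succAbove Fin.castSucc).det
      = Matrix.charmatrix x i (Fin.last n) * (lead x (i:ℕ) (by omega)).charpoly := by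
    intro i
    rw [minor_det n x hsub hzero i]
    have : (-1 : Polynomial ℂ)^((i:ℕ) + (Fin.last n : ℕ)) * (-1:Polynomial ℂ)^(n - (i:ℕ)) = 1 := by
      rw [← pow_add]
      apply Even.neg_one_pow
      have : (i:ℕ) ≤ n := by omega
      simp only [Fin.val_last]
      refine ⟨n, by omega⟩
    linear_combination (Matrix.charmatrix x i (Fin.last n)
      * (lead x (i:ℕ) (by omega : (i:ℕ) ≤ n+1)).charpoly) * this
  rw [Finset.sum_congr rfl (fun i _ => hterm i)]
  rw [Fin.sum_univ_castSucc]
  have hlast : Matrix.charmatrix x (Fin.last n) (Fin.last n)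
      = X - C (x (Fin.last n) (Fin.last n)) := by
    rw [Matrix.charmatrix_apply, Matrix.diagonal_apply, if_pos rfl]
  have hcs : ∀ i : Fin n, Matrix.charmatrix x (Fin.castSucc i) (Fin.last n)
      = - C (x (Fin.castSucc i) (Fin.last n)) := by
    intro i
    rw [Matrix.charmatrix_apply, Matrix.diagonal_apply,
      if_neg (by simp [Fin.ext_iff]; omega)]
    ring
  rw [hlast]
  rw [Finset.sum_congr rfl (fun i _ => by rw [hcs i])]
  have hlead : ∀ (h h' : n ≤ n+1), lead x n h = lead x n h' := fun _ _ => rfl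
  simp only [Fin.coe_castSucc, Fin.val_last, neg_mul]
  rw [Finset.sum_neg_distrib, neg_add_eq_sub]

lemma main_aux : ∀ (n : ℕ) (f : Fin n → Polynomial ℂ),
    (∀ k : Fin n, (f k).Monic) → (∀ k : Fin n, (f k).natDegree = (k : ℕ) + 1) →
    ∃! x : Matrix (Fin n) (Fin n) ℂ,
      (∀ i : Fin n, ∀ hi : (i : ℕ) + 1 < n, x ⟨(i : ℕ) + 1, hi⟩ i = 1) ∧
      (∀ i j : Fin n, (j : ℕ) + 1 < (i : ℕ) → x i j = 0) ∧
      (∀ k : Fin n,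
        (x.submatrix (Fin.castLE k.isLt) (Fin.castLE k.isLt)).charpoly = f k) := by
  intro n
  induction n with
  | zero =>
    intro f _ _
    refine ⟨0, ⟨fun i => i.elim0, fun i => i.elim0, fun k => k.elim0⟩, ?_⟩
    intro z _
    ext i j
    exact i.elim0
  | succ n ih =>
    intro f hmonic hdeg
    obtain ⟨y, ⟨hy1, hy2, hy3⟩, yuniq⟩ := ih (fun k => f (Fin.castSucc k))
      (fun k => hmonic _) (fun k => by simpa using hdeg (Fin.castSucc k))
    classical
    -- the reference polynomials
    set p : ℕ → Polynomial ℂ := fun m =>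
      if h : m ≤ n then (lead y m h).charpoly else X ^ m with hp
    have hpval : ∀ (m : ℕ) (h : m ≤ n), p m = (lead y m h).charpoly := by
      intro m h; simp only [hp]; rw [dif_pos h]
    have hpm : ∀ m, (p m).Monic := by
      intro m; simp only [hp]
      split
      · exact Matrix.charpoly_monic _
      · exact Polynomial.monic_X_pow _
    have hpd : ∀ m, (p m).natDegree = m := by
      intro m; simp only [hp]
      split
      · rw [Matrix.charpoly_natDegree_eq_dim, Fintype.card_fin]
      · exact natDegree_X_pow m
    have hfd : (f (Fin.last n)).natDegree = n + 1 := by simpa using hdeg (Fin.last n)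
    have hgdeg : (X * p n - f (Fin.last n)).degree < ((n+1 : ℕ) : WithBot ℕ) := by
      rw [Polynomial.degree_lt_iff_coeff_zero]
      intro k hk
      rcases eq_or_lt_of_le hk with h | h
      · subst h
        rw [Polynomial.coeff_sub, Polynomial.coeff_X_mul]
        have h1 : (p n).coeff n = 1 := by
          have := (hpm n).coeff_natDegree; rwa [hpd] at this
        have h2 : (f (Fin.last n)).coeff (n+1) = 1 := by
          have := (hmonic (Fin.last n)).coeff_natDegree; rwa [hfd] at this
        rw [h1, h2, sub_self]
      · obtain ⟨k', rfl⟩ : ∃ k', k = k' + 1 := ⟨k - 1, by omega⟩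
        rw [Polynomial.coeff_sub, Polynomial.coeff_X_mul]
        rw [Polynomial.coeff_eq_zero_of_natDegree_lt (by rw [hpd]; omega),
          Polynomial.coeff_eq_zero_of_natDegree_lt (by rw [hfd]; omega), sub_self]
    obtain ⟨c, hcrepr, hcuniq⟩ := exists_unique_repr p hpm hpd (n+1) _ hgdeg
    -- the candidate matrix
    set x : Matrix (Fin (n+1)) (Fin (n+1)) ℂ := Matrix.of fun i j =>
      if hij : (i:ℕ) < n ∧ (j:ℕ) < n then y ⟨i, hij.1⟩ ⟨j, hij.2⟩
      else if (j:ℕ) = n then c i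
      else if (i:ℕ) = n ∧ (j:ℕ)+1 = n then 1 else 0 with hx
    have hxin : ∀ (i j : Fin (n+1)) (hi : (i:ℕ) < n) (hj : (j:ℕ) < n),
        x i j = y ⟨i, hi⟩ ⟨j, hj⟩ := by
      intro i j hi hj
      simp only [hx, Matrix.of_apply]
      rw [dif_pos ⟨hi, hj⟩]
    have hxcol : ∀ i : Fin (n+1), x i (Fin.last n) = c i := by
      intro i
      simp only [hx, Matrix.of_apply, Fin.val_mk, Fin.val_last]
      split_ifs with h1 h2 <;> first | rfl | omega
    have hsub_x : ∀ i : Fin (n+1), ∀ hi : (i : ℕ) + 1 < n+1,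
        x ⟨(i : ℕ) + 1, hi⟩ i = 1 := by
      intro i hi
      rcases lt_or_ge ((i:ℕ)+1) n with h | h
      · rw [hxin _ _ (by simpa using h) (by omega)]
        exact hy1 ⟨(i:ℕ), by omega⟩ (by simpa using h)
      · have hin : (i:ℕ)+1 = n := by omega
        simp only [hx, Matrix.of_apply, Fin.val_mk]
        split_ifs with h1 h2 h3 <;> first | rfl | omega
    have hzero_x : ∀ i j : Fin (n+1), (j : ℕ) + 1 < (i : ℕ) → x i j = 0 := by
      intro i j hij
      rcases lt_or_ge ((i:ℕ)) n with h | h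
      · rw [hxin _ _ h (by omega)]
        exact hy2 _ _ (by simpa using hij)
      · have hin : (i:ℕ) = n := by omega
        simp only [hx, Matrix.of_apply, Fin.val_mk]
        split_ifs with h1 h2 h3 <;> first | rfl | omega
    have hleadxy : ∀ (m : ℕ) (h : m ≤ n+1) (h' : m ≤ n), lead x m h = lead y m h' := by
      intro m h h'
      ext a b
      simp only [lead, Matrix.submatrix_apply]
      rw [show Fin.castLE h a = (⟨(a:ℕ), by omega⟩ : Fin (n+1)) from rfl,
        show Fin.castLE h b = (⟨(b:ℕ), by omega⟩ : Fin (n+1)) from rfl]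
      rw [hxin _ _ (by simp; omega) (by simp; omega)]
      rfl
    -- the charpoly of the full matrix x is f (last n)
    have hcharx : x.charpoly = f (Fin.last n) := by
      have hrec := hess_charpoly_rec n x hsub_x hzero_x
      rw [hxcol (Fin.last n)] at hrec
      rw [hleadxy n (by omega) le_rfl, ← hpval n le_rfl] at hrec
      rw [Finset.sum_congr rfl (fun i (_ : i ∈ Finset.univ) => by
        rw [hxcol (Fin.castSucc i), hleadxy (i:ℕ) (by omega) (by omega),
          ← hpval (i:ℕ) (by omega)])] at hrec
      have hsum : ∑ i : Fin (n+1), C (c i) * p (i:ℕ)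
          = ∑ i : Fin n, C (c (Fin.castSucc i)) * p (i:ℕ) + C (c (Fin.last n)) * p n := by
        rw [Fin.sum_univ_castSucc]
        simp
      rw [hsum] at hcrepr
      linear_combination hrec + hcrepr
    refine ⟨x, ⟨hsub_x, hzero_x, ?_⟩, ?_⟩
    · intro k
      rcases lt_or_ge ((k:ℕ)) n with hkn | hkn
      · have hsm : x.submatrix (Fin.castLE k.isLt) (Fin.castLE k.isLt)
            = y.submatrix (Fin.castLE (show (k:ℕ)+1 ≤ n by omega))
                (Fin.castLE (show (k:ℕ)+1 ≤ n by omega)) := by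
          ext a b
          simp only [Matrix.submatrix_apply]
          rw [show Fin.castLE k.isLt a = (⟨(a:ℕ), by omega⟩ : Fin (n+1)) from rfl,
            show Fin.castLE k.isLt b = (⟨(b:ℕ), by omega⟩ : Fin (n+1)) from rfl]
          rw [hxin _ _ (by simp; omega) (by simp; omega)]
          rfl
        rw [hsm]
        have := hy3 ⟨(k:ℕ), hkn⟩
        simp only at this
        rw [show f (Fin.castSucc ⟨(k:ℕ), hkn⟩) = f k from congrArg f (Fin.ext rfl)] at this
        exact this
      · have hkl : k = Fin.last n := Fin.ext (by simp; omega)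
        subst hkl
        have hsm : x.submatrix (Fin.castLE (Fin.last n).isLt) (Fin.castLE (Fin.last n).isLt) = x := by
          ext a b
          simp only [Matrix.submatrix_apply]
          congr 1 <;> exact Fin.ext rfl
        rw [hsm, hcharx]
    · intro z hz
      obtain ⟨hz1, hz2, hz3⟩ := hz
      have hn : n ≤ n + 1 := by omega
      have hll : ∀ {m k : ℕ} (h1 : m ≤ n+1) (h2 : k ≤ m),
          (lead z m h1).submatrix (Fin.castLE h2) (Fin.castLE h2) = lead z k (h2.trans h1) :=
        fun _ _ => rfl
      -- the leading n×n block of z equals y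
      have hzy : lead z n hn = y := by
        apply yuniq
        refine ⟨?_, ?_, ?_⟩
        · intro i hi
          exact hz1 ⟨(i:ℕ), by omega⟩ (by simp)
        · intro i j hij
          exact hz2 (Fin.castLE hn i) (Fin.castLE hn j) (by simp; omega)
        · intro k
          have h := hz3 (Fin.castSucc k)
          simp only [Fin.coe_castSucc] at h
          rw [show (lead z n hn).submatrix (Fin.castLE k.isLt) (Fin.castLE k.isLt)
              = lead z ((k:ℕ)+1) (by omega) from hll hn k.isLt]
          rw [show z.submatrix (Fin.castLE (Fin.castSucc k).isLt) (Fin.castLE (Fin.castSucc k).isLt)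
              = lead z ((k:ℕ)+1) (by omega) from rfl] at h
          exact h
      have hzleadm : ∀ (m : ℕ) (h : m ≤ n+1) (h' : m ≤ n), lead z m h = lead y m h' := by
        intro m h h'
        rw [show lead z m h = (lead z n hn).submatrix (Fin.castLE h') (Fin.castLE h') from
          (hll hn h').symm, hzy]
        rfl
      -- z has charpoly f last
      have hcharz : z.charpoly = f (Fin.last n) := by
        have h := hz3 (Fin.last n)
        rw [show z.submatrix (Fin.castLE (Fin.last n).isLt) (Fin.castLE (Fin.last n).isLt)
            = z from by ext a b; simp only [Matrix.submatrix_apply]; congr 1 <;> exact Fin.ext rfl] at h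
        exact h
      -- last column of z equals c
      have hrecz := hess_charpoly_rec n z hz1 hz2
      rw [hzleadm n (by omega) le_rfl, ← hpval n le_rfl] at hrecz
      rw [Finset.sum_congr rfl (fun i (_ : i ∈ Finset.univ) => by
        rw [hzleadm (i:ℕ) (by omega) (by omega), ← hpval (i:ℕ) (by omega)])] at hrecz
      have hzc : (fun i : Fin (n+1) => z i (Fin.last n)) = c := by
        apply hcuniq
        have hsum2 : ∑ i : Fin (n+1), C (z i (Fin.last n)) * p (i:ℕ)
            = ∑ i : Fin n, C (z (Fin.castSucc i) (Fin.last n)) * p (i:ℕ)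
              + C (z (Fin.last n) (Fin.last n)) * p n := by
          rw [Fin.sum_univ_castSucc]
          simp
        show X * p n - f (Fin.last n) = _
        rw [hsum2]
        linear_combination hcharz - hrecz
      -- conclude z = x
      ext i j
      rcases lt_or_ge ((j:ℕ)) n with hj | hj
      · rcases lt_or_ge ((i:ℕ)) n with hi | hi
        · have h1 : z i j = lead z n hn ⟨(i:ℕ), hi⟩ ⟨(j:ℕ), hj⟩ := rfl
          rw [h1, hzy, hxin i j hi hj]
        · have hi' : (i:ℕ) = n := by omega
          rcases lt_or_ge ((j:ℕ)+1) n with hj1 | hj1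
          · rw [hz2 i j (by omega), hzero_x i j (by omega)]
          · have hj2 : (j:ℕ)+1 = n := by omega
            have hieq : i = (⟨(j:ℕ)+1, by omega⟩ : Fin (n+1)) := Fin.ext (by simp; omega)
            rw [hieq]
            rw [hz1 j (by omega), hsub_x j (by omega)]
      · have hjl : j = Fin.last n := Fin.ext (by simp; omega)
        rw [hjl, hxcol i]
        exact congrFun hzc i

/-- Existence and uniqueness of a Hessenberg matrix with prescribed
characteristic polynomials of all upper-left principal blocks. -/
theorem exists_unique_hessenberg_with_charpolys (n : ℕ)
    (f : Fin n → Polynomial ℂ)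
    (hmonic : ∀ k : Fin n, (f k).Monic)
    (hdeg : ∀ k : Fin n, (f k).natDegree = (k : ℕ) + 1) :
    ∃! x : Matrix (Fin n) (Fin n) ℂ,
      (∀ i : Fin n, ∀ hi : (i : ℕ) + 1 < n, x ⟨(i : ℕ) + 1, hi⟩ i = 1) ∧
      (∀ i j : Fin n, (j : ℕ) + 1 < (i : ℕ) → x i j = 0) ∧
      (∀ k : Fin n,
        (x.submatrix (Fin.castLE k.isLt) (Fin.castLE k.isLt) :
          Matrix (Fin ((k : ℕ) + 1)) (Fin ((k : ℕ) + 1)) ℂ).charpoly = f k) := by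
  exact main_aux n f hmonic hdeg
end

section
/- Equip $M(n,\mathbb{C})\cong\mathfrak{gl}(n)^*$ (via the trace form) with its Lie–Poisson bracket, so that for the matrix-entry coordinate functions one has $\{x_{ij},x_{kl}\}=\delta_{jk}x_{il}-\delta_{li}x_{kj}$. Then for each $m\le n$ and $1\le k\le m$, the function $f_{m,k}(x)=\operatorname{tr}(x_m^k)$ (trace of the $k$-th power of the upper-left $m\times m$ block) satisfies: $\{f_{m,k},f_{m',k'}\}=0$ for all $m,m'\le n$ and all $k,k'$. -/
/-!
If `df_x(H) = tr(F H)` and `dg_x(H) = tr(G H)`, the Lie–Poisson bracket is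
`{f,g}(x) = tr(x ⁅G, F⁆)`. The gradient of `tr((x_m)^k)` is `k (x_m)^(k-1)` extended by zero to
an `n × n` matrix. For `m ≤ m'` both gradients are extended by zero from the `m' × m'` block, so
the bracket becomes a multiple of `tr(x_{m'} ⁅x_{m'}^(k'-1), U⁆)` for some `U`, which vanishes
because `x_{m'}` commutes with its powers.
-/

attribute [local instance] Matrix.normedAddCommGroup Matrix.normedSpace

/-- The Lie–Poisson bracket on `M(n,ℂ) ≅ 𝔤𝔩(n)^*` (via the trace form), written in
matrix-entry coordinates: `{f,g}(x) = ∑ ∂f/∂x_{ij} ∂g/∂x_{kl} (δ_{jk} x_{il} - δ_{li} x_{kj})`. -/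
noncomputable def liePoissonBracket {n : ℕ}
    (f g : Matrix (Fin n) (Fin n) ℂ → ℂ) (x : Matrix (Fin n) (Fin n) ℂ) : ℂ :=
  ∑ i, ∑ j, ∑ k, ∑ l,
    fderiv ℂ f x (Matrix.single i j (1 : ℂ)) *
      fderiv ℂ g x (Matrix.single k l (1 : ℂ)) *
      ((if j = k then x i l else 0) - (if l = i then x k j else 0))

theorem HasFDerivAt.clm_apply_pow_of_tracial {𝕜 𝔸 E : Type*} [NontriviallyNormedField 𝕜]
    [NormedRing 𝔸] [NormedAlgebra 𝕜 𝔸] [NormedAddCommGroup E] [NormedSpace 𝕜 E]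
    {τ : 𝔸 →L[𝕜] 𝕜} (hτ : ∀ a b, τ (a * b) = τ (b * a))
    {f : E → 𝔸} {f' : E →L[𝕜] 𝔸} {x : E} (hf : HasFDerivAt f f' x) (k : ℕ) :
    HasFDerivAt (fun y => τ (f y ^ k))
      ((k : 𝕜) • τ.comp ((ContinuousLinearMap.mul 𝕜 𝔸 (f x ^ (k - 1))).comp f')) x := by
  refine (τ.hasFDerivAt.comp x (hf.pow' k)).congr_fderiv ?_
  ext v
  have hterm : ∀ i ∈ Finset.range k,
      τ (f x ^ (k.pred - i) * f' v * f x ^ i) = τ (f x ^ (k - 1) * f' v) := by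
    intro i hi
    rw [hτ, ← mul_assoc, ← pow_add, Nat.pred_eq_sub_one,
      Nat.add_sub_cancel' (Nat.le_sub_one_of_lt (Finset.mem_range.mp hi))]
  simpa [smul_eq_mul, mul_assoc] using Finset.sum_congr rfl hterm

namespace Matrix

variable {ι ι' κ o R : Type*} [Fintype ι] [Fintype κ] [DecidableEq κ] [CommRing R]

omit [Fintype ι] in
theorem one_submatrix_id_mul (e : ι → κ) (M : Matrix κ o R) :
    (1 : Matrix κ κ R).submatrix e id * M = M.submatrix e id := by
  ext i j; simp [mul_apply, one_apply]

omit [Fintype ι] in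
theorem mul_one_submatrix_id (e : ι → κ) (M : Matrix o κ R) :
    M * (1 : Matrix κ κ R).submatrix id e = M.submatrix id e := by
  ext i j; simp [mul_apply, one_apply]

/-- For injective `e`, this puts `U` on the rows and columns in the range of `e`, and zeros
elsewhere. -/
def extendByZero (e : ι → κ) (U : Matrix ι ι R) : Matrix κ κ R :=
  (1 : Matrix κ κ R).submatrix id e * U * (1 : Matrix κ κ R).submatrix e id

theorem trace_extendByZero_mul (e : ι → κ) (U : Matrix ι ι R) (H : Matrix κ κ R) :
    trace (extendByZero e U * H) = trace (U * H.submatrix e e) := by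
  rw [extendByZero, Matrix.mul_assoc, Matrix.mul_assoc, trace_mul_comm, Matrix.mul_assoc,
    Matrix.mul_assoc, mul_one_submatrix_id, one_submatrix_id_mul, submatrix_submatrix]
  rfl

omit [Fintype κ] in
theorem extendByZero_comp [Fintype ι'] [DecidableEq ι] (e : ι → κ) (e' : ι' → ι)
    (U : Matrix ι' ι' R) :
    extendByZero (e ∘ e') U = extendByZero e (extendByZero e' U) := by
  have hleft : (1 : Matrix κ κ R).submatrix id (e ∘ e')
      = (1 : Matrix κ κ R).submatrix id e * (1 : Matrix ι ι R).submatrix id e' := by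
    rw [mul_one_submatrix_id, submatrix_submatrix]; rfl
  have hright : (1 : Matrix κ κ R).submatrix (e ∘ e') id
      = (1 : Matrix ι ι R).submatrix e' id * (1 : Matrix κ κ R).submatrix e id := by
    rw [one_submatrix_id_mul, submatrix_submatrix]; rfl
  simp only [extendByZero, hleft, hright, Matrix.mul_assoc]

variable [DecidableEq ι]

theorem extendByZero_mul_extendByZero {e : ι → κ} (he : Function.Injective e)
    (U V : Matrix ι ι R) :
    extendByZero e U * extendByZero e V = extendByZero e (U * V) := by
  have hproj : (1 : Matrix κ κ R).submatrix e id * (1 : Matrix κ κ R).submatrix id e = 1 := by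
    rw [one_submatrix_id_mul, submatrix_submatrix]; exact submatrix_one e he
  simp only [extendByZero, Matrix.mul_assoc]
  rw [← Matrix.mul_assoc ((1 : Matrix κ κ R).submatrix e id), hproj, Matrix.one_mul]

theorem extendByZero_lie {e : ι → κ} (he : Function.Injective e) (U V : Matrix ι ι R) :
    ⁅extendByZero e U, extendByZero e V⁆ = extendByZero e ⁅U, V⁆ := by
  rw [Ring.lie_def, Ring.lie_def, extendByZero_mul_extendByZero he,
    extendByZero_mul_extendByZero he]
  simp only [extendByZero, Matrix.mul_sub, Matrix.sub_mul]

theorem trace_lie_pow_mul_self (B U : Matrix ι ι R) (b : ℕ) : trace (⁅B ^ b, U⁆ * B) = 0 := by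
  rw [Ring.lie_def, Matrix.sub_mul, trace_sub, Matrix.mul_assoc, trace_mul_comm, Matrix.mul_assoc,
    ← pow_succ', pow_succ, Matrix.mul_assoc, sub_self]

theorem trace_mul_lie_extendByZero_pow_submatrix {e : ι → κ} (he : Function.Injective e)
    (x : Matrix κ κ R) (U : Matrix ι ι R) (b : ℕ) :
    trace (x * ⁅extendByZero e (x.submatrix e e ^ b), extendByZero e U⁆) = 0 := by
  rw [extendByZero_lie he, trace_mul_comm, trace_extendByZero_mul, trace_lie_pow_mul_self]

theorem trace_mul_lie_extendByZero_castLE_pow {m m' n : ℕ} (hmm' : m ≤ m') (hm : m ≤ n)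
    (hm' : m' ≤ n) (x : Matrix (Fin n) (Fin n) R) (U : Matrix (Fin m) (Fin m) R) (b : ℕ) :
    trace (x * ⁅extendByZero (Fin.castLE hm')
      (x.submatrix (Fin.castLE hm') (Fin.castLE hm') ^ b), extendByZero (Fin.castLE hm) U⁆)
      = 0 := by
  have hcomp : Fin.castLE hm = Fin.castLE hm' ∘ Fin.castLE hmm' := rfl
  rw [hcomp, extendByZero_comp]
  exact trace_mul_lie_extendByZero_pow_submatrix (Fin.castLE_injective hm') x _ b

omit [DecidableEq κ] in
theorem fderiv_trace_pow_submatrix {𝕜 : Type*} [NontriviallyNormedField 𝕜] [CompleteSpace 𝕜]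
    (e : ι → κ) (x H : Matrix κ κ 𝕜) (k : ℕ) :
    fderiv 𝕜 (fun y : Matrix κ κ 𝕜 => trace (y.submatrix e e ^ k)) x H
      = k * trace (x.submatrix e e ^ (k - 1) * H.submatrix e e) := by
  -- The derivative of a scalar function does not depend on the norm of the intermediate
  -- space, so the block may carry the submultiplicative `ℓ∞`-operator norm.
  let _ : NormedRing (Matrix ι ι 𝕜) := Matrix.linftyOpNormedRing
  let _ : NormedAlgebra 𝕜 (Matrix ι ι 𝕜) := Matrix.linftyOpNormedAlgebra
  let τ : Matrix ι ι 𝕜 →L[𝕜] 𝕜 := LinearMap.toContinuousLinearMap (traceLinearMap ι 𝕜 𝕜)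
  let restrict : Matrix κ κ 𝕜 →L[𝕜] Matrix ι ι 𝕜 := LinearMap.toContinuousLinearMap
    { toFun := fun y => y.submatrix e e, map_add' := fun _ _ => rfl, map_smul' := fun _ _ => rfl }
  have hτ : ∀ a b : Matrix ι ι 𝕜, τ (a * b) = τ (b * a) := fun a b => trace_mul_comm a b
  exact congrArg (· H) (restrict.hasFDerivAt.clm_apply_pow_of_tracial hτ k).fderiv

end Matrix

open Matrix

theorem liePoissonBracket_eq_trace_mul_lie {n : ℕ} {f g : Matrix (Fin n) (Fin n) ℂ → ℂ}
    {x F G : Matrix (Fin n) (Fin n) ℂ} (hf : ∀ H, fderiv ℂ f x H = trace (F * H))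
    (hg : ∀ H, fderiv ℂ g x H = trace (G * H)) :
    liePoissonBracket f g x = trace (x * ⁅G, F⁆) := by
  have hlie : trace (x * ⁅G, F⁆) = trace (F * x * G) - trace (F * G * x) := by
    rw [Ring.lie_def, Matrix.mul_sub, trace_sub, ← Matrix.mul_assoc, trace_mul_comm,
      trace_mul_comm x]
    simp only [Matrix.mul_assoc]
  rw [hlie]
  simp only [liePoissonBracket, hf, hg, trace_mul_single, MulOpposite.op_one, one_smul, mul_sub,
    Finset.sum_sub_distrib, mul_ite, mul_zero, Finset.sum_ite_irrel, Finset.sum_const_zero,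
    Finset.sum_ite_eq, Finset.sum_ite_eq', Finset.mem_univ, if_true]
  simp only [trace, diag, mul_apply, Finset.sum_mul]
  congr 1
  · rw [Finset.sum_comm]
    refine Finset.sum_congr rfl fun _ _ => ?_
    rw [Finset.sum_comm]
    exact Finset.sum_congr rfl fun _ _ => Finset.sum_congr rfl fun _ _ => by ring
  · rw [Finset.sum_comm]
    exact Finset.sum_congr rfl fun _ _ => Finset.sum_comm

/-- The Gelfand–Zeitlin functions `f_{m,k}(x) = tr((x_m)^k)` (traces
of powers of the upper-left `m×m` blocks) pairwise Poisson commute for the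
Lie–Poisson structure on `M(n,ℂ)`. -/
theorem gelfandZeitlin_poisson_commute (n : ℕ)
    (m m' : ℕ) (hm : m ≤ n) (hm' : m' ≤ n) (k k' : ℕ)
    (x : Matrix (Fin n) (Fin n) ℂ) :
    liePoissonBracket
      (fun y => Matrix.trace ((y.submatrix (Fin.castLE hm) (Fin.castLE hm)) ^ k))
      (fun y => Matrix.trace ((y.submatrix (Fin.castLE hm') (Fin.castLE hm')) ^ k'))
      x = 0 := by
  have gradient {p : ℕ} (hp : p ≤ n) (j : ℕ) (H : Matrix (Fin n) (Fin n) ℂ) :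
      fderiv ℂ (fun y => trace (y.submatrix (Fin.castLE hp) (Fin.castLE hp) ^ j)) x H
        = trace (((j : ℂ) • extendByZero (Fin.castLE hp)
            (x.submatrix (Fin.castLE hp) (Fin.castLE hp) ^ (j - 1))) * H) := by
    rw [fderiv_trace_pow_submatrix, smul_mul, trace_smul, trace_extendByZero_mul, smul_eq_mul]
  rw [liePoissonBracket_eq_trace_mul_lie (gradient hm k) (gradient hm' k'), Ring.lie_def,
    smul_mul_smul_comm, smul_mul_smul_comm, mul_comm (k : ℂ), ← smul_sub, ← Ring.lie_def,
    Matrix.mul_smul, trace_smul]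
  refine smul_eq_zero_of_right _ ?_
  rcases le_total m m' with hmm' | hm'm
  · exact trace_mul_lie_extendByZero_castLE_pow hmm' hm hm' x _ _
  · rw [← neg_eq_zero, ← trace_neg, ← Matrix.mul_neg, Ring.lie_def, neg_sub, ← Ring.lie_def]
    exact trace_mul_lie_extendByZero_castLE_pow hm'm hm' hm x _ _
end
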